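/- Let Γ be a finite simple graph with vertex set A and G = G(Γ). Let s be a cyclically minimal element such that supp(s) is a clique, and such that supp(s) is NOT synchronised, meaning there exist t ∈ supp(s) and x ∈ A \ (supp(s) ∪ lk(supp(s))) with [x,t] = 1. Let r = sⁿ for some n ≥ 1, N the normal closure of r in G, and Q = G/N. Then the canonical parabolic subgroup ⟨A \ {t}⟩ does not embed in Q. -/

import Mathlib

set_option linter.unusedSectionVars false
set_option maxHeartbeats 1000000


/-- The commutation relations of a right-angled Artin group on the graph `Γ`. -/
def raagRels {A : Type*} (Γ : SimpleGraph A) : Set (FreeGroup A) :=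
  {r | ∃ x y : A, Γ.Adj x y ∧
      r = FreeGroup.of x * FreeGroup.of y * (FreeGroup.of x)⁻¹ * (FreeGroup.of y)⁻¹}

/-- The right-angled Artin (partially commutative) group on the graph `Γ`. -/
abbrev RAAG {A : Type*} (Γ : SimpleGraph A) := PresentedGroup (raagRels Γ)

/-- The canonical generator of the RAAG corresponding to a vertex. -/
def raagGen {A : Type*} (Γ : SimpleGraph A) (a : A) : RAAG Γ := PresentedGroup.of a

/-- The word length of an element of a RAAG with respect to the canonical generators. -/
noncomputable def raagLen {A : Type*} [DecidableEq A] (Γ : SimpleGraph A) (g : RAAG Γ) : ℕ :=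
  sInf {n | ∃ w : FreeGroup A, PresentedGroup.mk (raagRels Γ) w = g ∧ w.toWord.length = n}

/-- The support of an element: the set of generators occurring in a minimal-length word
representing it. -/
noncomputable def raagSupp {A : Type*} [DecidableEq A] (Γ : SimpleGraph A) (g : RAAG Γ) : Set A :=
  {a | ∃ w : FreeGroup A, PresentedGroup.mk (raagRels Γ) w = g ∧
      w.toWord.length = raagLen Γ g ∧ a ∈ w.toWord.map Prod.fst}

/-- The canonical parabolic subgroup generated by a subset of the vertices. -/
def parabolic {A : Type*} (Γ : SimpleGraph A) (Y : Set A) : Subgroup (RAAG Γ) :=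
  Subgroup.closure (raagGen Γ '' Y)

/-- `maln K` : the set of elements `x` with `x⁻¹ K x ∩ K = {1}`. -/
def maln {G : Type*} [Group G] (K : Subgroup G) : Set G :=
  {x : G | ∀ k ∈ K, x⁻¹ * k * x ∈ K → k = 1}

/-- An element is cyclically minimal if it has minimal length in its conjugacy class. -/
def CyclicallyMinimal {A : Type*} [DecidableEq A] (Γ : SimpleGraph A) (g : RAAG Γ) : Prop :=
  ∀ x : RAAG Γ, raagLen Γ g ≤ raagLen Γ (x⁻¹ * g * x)

/- ----------------  Auxiliary lemmas ---------------- -/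

theorem hom_fg_mk {α M : Type*} [Group M] (F : FreeGroup α →* M) (L : List (α × Bool)) :
    F (FreeGroup.mk L)
      = (L.map fun p => cond p.2 (F (FreeGroup.of p.1)) (F (FreeGroup.of p.1))⁻¹).prod := by
  have h : ∀ (G : FreeGroup α →* M), G (FreeGroup.mk L)
      = (L.map fun p => cond p.2 (G (FreeGroup.of p.1)) (G (FreeGroup.of p.1))⁻¹).prod := by
    intro G
    have h2 : G = FreeGroup.lift (fun a => G (FreeGroup.of a)) := by ext a; simp
    nth_rewrite 1 [h2]
    rw [FreeGroup.lift_mk]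
  exact h F

theorem raag_mk_of {A : Type*} (Γ : SimpleGraph A) (a : A) :
    PresentedGroup.mk (raagRels Γ) (FreeGroup.of a) = raagGen Γ a := rfl

theorem gen_commute_of_adj {A : Type*} (Γ : SimpleGraph A) {a b : A} (h : Γ.Adj a b) :
    Commute (raagGen Γ a) (raagGen Γ b) := by
  have hr : (FreeGroup.of a * FreeGroup.of b * (FreeGroup.of a)⁻¹ * (FreeGroup.of b)⁻¹ :
      FreeGroup A) ∈ raagRels Γ := ⟨a, b, h, rfl⟩
  have h1 : PresentedGroup.mk (raagRels Γ)
      (FreeGroup.of a * FreeGroup.of b * (FreeGroup.of a)⁻¹ * (FreeGroup.of b)⁻¹) = 1 :=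
    (QuotientGroup.eq_one_iff _).mpr (Subgroup.subset_normalClosure hr)
  rw [map_mul, map_mul, map_inv, map_inv, raag_mk_of, raag_mk_of] at h1
  exact commutatorElement_eq_one_iff_commute.mp h1

/-- a homomorphism from the RAAG determined by commuting values -/
def raagHom {A : Type*} (Γ : SimpleGraph A) {M : Type*} [Group M] (f : A → M)
    (hf : ∀ a b : A, Γ.Adj a b → Commute (f a) (f b)) : RAAG Γ →* M :=
  PresentedGroup.toGroup (f := f) (by
    rintro r ⟨p, q, hpq, rfl⟩
    simp only [map_mul, map_inv, FreeGroup.lift_apply_of]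
    exact commutatorElement_eq_one_iff_commute.mpr (hf p q hpq))

@[simp] theorem raagHom_gen {A : Type*} (Γ : SimpleGraph A) {M : Type*} [Group M] (f : A → M)
    (hf : ∀ a b : A, Γ.Adj a b → Commute (f a) (f b)) (a : A) :
    raagHom Γ f hf (raagGen Γ a) = f a :=
  PresentedGroup.toGroup.of _

theorem prod_zpow_mul' {A G : Type*} [DecidableEq A] [Group G] (f : A → G) : ∀ (l : List A),
    (∀ a ∈ l, ∀ b ∈ l, Commute (f a) (f b)) → ∀ c d : A → ℤ,
    (l.map fun a => f a ^ c a).prod * (l.map fun a => f a ^ d a).prod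
      = (l.map fun a => f a ^ (c a + d a)).prod := by
  intro l
  induction l with
  | nil => intro _ c d; simp
  | cons a l ih =>
    intro h c d
    have hcomm : Commute (f a ^ d a) ((l.map fun b => f b ^ c b).prod) := by
      apply Commute.list_prod_right
      intro y hy
      simp only [List.mem_map] at hy
      obtain ⟨b, hb, rfl⟩ := hy
      exact ((h a (by simp) b (by simp [hb])).zpow_zpow _ _)
    simp only [List.map_cons, List.prod_cons]
    calc f a ^ c a * (l.map fun b => f b ^ c b).prod * (f a ^ d a * (l.map fun b => f b ^ d b).prod)
        = f a ^ c a * ((l.map fun b => f b ^ c b).prod * f a ^ d a) *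
            (l.map fun b => f b ^ d b).prod := by group
      _ = f a ^ c a * (f a ^ d a * (l.map fun b => f b ^ c b).prod) *
            (l.map fun b => f b ^ d b).prod := by rw [hcomm.eq]
      _ = (f a ^ c a * f a ^ d a) *
            ((l.map fun b => f b ^ c b).prod * (l.map fun b => f b ^ d b).prod) := by group
      _ = f a ^ (c a + d a) * (l.map fun b => f b ^ (c b + d b)).prod := by
          rw [← zpow_add, ih (fun p hp q hq => h p (by simp [hp]) q (by simp [hq])) c d]

theorem prod_map_eq_single {A G : Type*} [DecidableEq A] [Group G] (f : A → G) :
    ∀ (l : List A), l.Nodup → ∀ a ∈ l,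
    (∀ b ∈ l, b ≠ a → f b = 1) → (l.map f).prod = f a := by
  intro l
  induction l with
  | nil => simp
  | cons p l ih =>
    intro hnd a ha h1
    simp only [List.nodup_cons] at hnd
    simp only [List.map_cons, List.prod_cons]
    rcases List.mem_cons.mp ha with rfl | ha'
    · have : ∀ y ∈ l.map f, y = 1 := by
        rintro y hy
        simp only [List.mem_map] at hy
        obtain ⟨b, hb, rfl⟩ := hy
        exact h1 b (by simp [hb]) (fun hba => hnd.1 (hba ▸ hb))
      rw [List.prod_eq_one this, mul_one]
    · rw [h1 p (by simp) (fun hpa => hnd.1 (hpa ▸ ha')), one_mul]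
      exact ih hnd.2 a ha' (fun b hb => h1 b (by simp [hb]))

theorem mem_closure_eq_prod {A G : Type*} [DecidableEq A] [Group G] (f : A → G) (l : List A)
    (hnd : l.Nodup) (hcomm : ∀ a ∈ l, ∀ b ∈ l, Commute (f a) (f b))
    {g : G} (hg : g ∈ Subgroup.closure (f '' {a | a ∈ l})) :
    ∃ c : A → ℤ, g = (l.map fun a => f a ^ c a).prod := by
  induction hg using Subgroup.closure_induction with
  | mem x hx =>
      obtain ⟨a, ha, rfl⟩ := hx
      refine ⟨fun b => if b = a then 1 else 0, ?_⟩
      have := prod_map_eq_single (fun b => f b ^ (if b = a then (1:ℤ) else 0)) l hnd a ha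
        (by intro b hb hba; simp [hba])
      simp only [this]
      simp
  | one =>
      refine ⟨0, ?_⟩
      rw [List.prod_eq_one]
      intro y hy
      simp only [List.mem_map] at hy
      obtain ⟨b, hb, rfl⟩ := hy
      simp
  | mul x y hx hy ihx ihy =>
      obtain ⟨c, rfl⟩ := ihx; obtain ⟨d, rfl⟩ := ihy
      exact ⟨c + d, by simpa using prod_zpow_mul' f l hcomm c d⟩
  | inv x hx ihx =>
      obtain ⟨c, rfl⟩ := ihx
      refine ⟨-c, inv_eq_of_mul_eq_one_right ?_⟩
      have h1 := prod_zpow_mul' f l hcomm c (-c)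
      simp only [Pi.neg_apply] at h1 ⊢
      rw [h1, List.prod_eq_one]
      intro y hy
      simp only [List.mem_map] at hy
      obtain ⟨b, hb, rfl⟩ := hy
      simp

theorem toAdd_prod_natAbs_le {α : Type*} [DecidableEq α] (a : α)
    (v : α × Bool → Multiplicative ℤ)
    (hv : ∀ p, (Multiplicative.toAdd (v p)).natAbs ≤ if p.1 = a then 1 else 0) :
    ∀ L : List (α × Bool),
      (Multiplicative.toAdd ((L.map v).prod)).natAbs ≤ (L.map Prod.fst).count a := by
  intro L
  induction L with
  | nil => simp
  | cons p L ih =>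
    simp only [List.map_cons, List.prod_cons, toAdd_mul]
    have h1 := hv p
    have h2 := Int.natAbs_add_le (Multiplicative.toAdd (v p))
      (Multiplicative.toAdd ((L.map v).prod))
    by_cases hpa : p.1 = a
    · rw [hpa, List.count_cons_self]
      simp only [if_pos hpa] at h1
      omega
    · rw [List.count_cons_of_ne hpa]
      simp only [if_neg hpa] at h1
      omega

theorem norm_zpow_le {α : Type*} [DecidableEq α] (a : α) (k : ℤ) :
    FreeGroup.norm (FreeGroup.of a ^ k) ≤ k.natAbs := by
  cases k with
  | ofNat m => rw [Int.ofNat_eq_coe, zpow_natCast, FreeGroup.norm_of_pow]; simp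
  | negSucc m => rw [zpow_negSucc, FreeGroup.norm_inv_eq, FreeGroup.norm_of_pow]; simp

theorem norm_list_prod_le {α : Type*} [DecidableEq α] :
    ∀ l : List (FreeGroup α), FreeGroup.norm l.prod ≤ (l.map FreeGroup.norm).sum := by
  intro l
  induction l with
  | nil => simp
  | cons x l ih =>
    simp only [List.prod_cons, List.map_cons, List.sum_cons]
    exact le_trans (FreeGroup.norm_mul_le _ _) (by omega)

/-- If s is cyclically minimal with clique support which is not synchronised — witnessed by
t ∈ supp(s) and a vertex x outside supp(s) ∪ lk(supp(s)) commuting with t — then for any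
n ≥ 1, the canonical parabolic subgroup on A \ {t} does not embed in G/N(sⁿ). -/
theorem raag_clique_not_synchronised_no_embedding {A : Type*} [DecidableEq A]
    (Γ : SimpleGraph A) (s : RAAG Γ)
    (hcm : CyclicallyMinimal Γ s)
    (hclique : ∀ x ∈ raagSupp Γ s, ∀ y ∈ raagSupp Γ s, x ≠ y → Γ.Adj x y)
    (t x : A) (ht : t ∈ raagSupp Γ s)
    (hx1 : x ∉ raagSupp Γ s)
    (hx2 : ¬ (∀ b ∈ raagSupp Γ s, Γ.Adj x b))
    (hxt : Γ.Adj x t)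
    (n : ℕ) (hn : 1 ≤ n) :
    ¬ Function.Injective
      (fun g : parabolic Γ {a : A | a ≠ t} =>
        (QuotientGroup.mk (g : RAAG Γ) :
          RAAG Γ ⧸ Subgroup.normalClosure {s ^ n})) := by
  intro hInj
  push_neg at hx2
  obtain ⟨b, hbsupp, hbnadj⟩ := hx2
  obtain ⟨wt, hwt_mk, hwt_len, hwt_mem⟩ := ht
  obtain ⟨wb, hwb_mk, hwb_len, hwb_mem⟩ := hbsupp
  have hbsupp' : b ∈ raagSupp Γ s := ⟨wb, hwb_mk, hwb_len, hwb_mem⟩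
  have htsupp : t ∈ raagSupp Γ s := ⟨wt, hwt_mk, hwt_len, hwt_mem⟩
  have hxt' : x ≠ t := hxt.ne
  have htb : t ≠ b := fun h => hbnadj (h ▸ hxt)
  have hxb : x ≠ b := fun h => hx1 (h ▸ hbsupp')
  -- the support finset
  set S : Finset A := (wt.toWord.map Prod.fst).toFinset ∪ (wb.toWord.map Prod.fst).toFinset
    with hS
  have hsubsupp : ∀ a ∈ S, a ∈ raagSupp Γ s := by
    intro a haS
    rw [hS, Finset.mem_union, List.mem_toFinset, List.mem_toFinset] at haS
    rcases haS with h | h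
    · exact ⟨wt, hwt_mk, hwt_len, h⟩
    · exact ⟨wb, hwb_mk, hwb_len, h⟩
  have htS : t ∈ S := by
    simp only [hS, Finset.mem_union, List.mem_toFinset]; left; exact hwt_mem
  have hbS : b ∈ S := by
    simp only [hS, Finset.mem_union, List.mem_toFinset]; right; exact hwb_mem
  have hcommS : ∀ a ∈ S.toList, ∀ a' ∈ S.toList,
      Commute (raagGen Γ a) (raagGen Γ a') := by
    intro a ha a' ha'
    rw [Finset.mem_toList] at ha ha'
    by_cases h : a = a'
    · exact h ▸ Commute.refl _
    · exact gen_commute_of_adj Γ (hclique a (hsubsupp a ha) a' (hsubsupp a' ha') h)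
  -- s lies in the subgroup generated by the support generators
  have hmem : s ∈ Subgroup.closure (raagGen Γ '' {a | a ∈ S.toList}) := by
    rw [← hwt_mk, ← FreeGroup.mk_toWord (x := wt), hom_fg_mk]
    apply Subgroup.list_prod_mem
    intro g hg
    simp only [List.mem_map] at hg
    obtain ⟨p, hp, rfl⟩ := hg
    have hpS : p.1 ∈ {a | a ∈ S.toList} := by
      simp only [Set.mem_setOf_eq, Finset.mem_toList]
      rw [hS, Finset.mem_union, List.mem_toFinset]
      left; exact List.mem_map_of_mem (f := Prod.fst) hp
    have hgen : PresentedGroup.mk (raagRels Γ) (FreeGroup.of p.1)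
        ∈ raagGen Γ '' {a | a ∈ S.toList} := ⟨p.1, hpS, rfl⟩
    cases hb2 : p.2
    · exact Subgroup.inv_mem _ (Subgroup.subset_closure hgen)
    · exact Subgroup.subset_closure hgen
  obtain ⟨c, hc⟩ := mem_closure_eq_prod (raagGen Γ) S.toList S.nodup_toList hcommS hmem
  -- the exponent-sum homomorphisms
  set ψ : A → (RAAG Γ →* Multiplicative ℤ) := fun a =>
    raagHom Γ (fun b' => Multiplicative.ofAdd (if b' = a then (1:ℤ) else 0))
      (fun _ _ _ => Commute.all _ _) with hψ
  have hc_exp : ∀ a ∈ S.toList, Multiplicative.toAdd (ψ a s) = c a := by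
    intro a ha
    rw [hc, map_list_prod, List.map_map]
    have h1 : (⇑(ψ a) ∘ fun a' => raagGen Γ a' ^ c a')
        = fun a' => (Multiplicative.ofAdd (if a' = a then (1:ℤ) else 0)) ^ (c a') := by
      funext a'
      simp only [Function.comp_apply, map_zpow, hψ, raagHom_gen]
    rw [h1, prod_map_eq_single _ S.toList S.nodup_toList a ha
      (by intro b' _ hba; simp [hba])]
    simp
  -- counting: exponent sums are bounded by letter counts in the minimal word wb
  have hcount : ∀ a : A,
      (Multiplicative.toAdd (ψ a s)).natAbs ≤ (wb.toWord.map Prod.fst).count a := by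
    intro a
    have h0 : ψ a s = ((ψ a).comp (PresentedGroup.mk (raagRels Γ))) (FreeGroup.mk wb.toWord) := by
      rw [MonoidHom.comp_apply, FreeGroup.mk_toWord, hwb_mk]
    rw [h0, hom_fg_mk]
    apply toAdd_prod_natAbs_le
    intro p
    have h2 : ∀ a' : A, ψ a (PresentedGroup.mk (raagRels Γ) (FreeGroup.of a'))
        = Multiplicative.ofAdd (if a' = a then (1:ℤ) else 0) := by
      intro a'
      rw [raag_mk_of, hψ]
      exact raagHom_gen Γ _ _ a'
    by_cases hpa : p.1 = a <;>
      cases hp2 : p.2 <;>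
      simp [h2, hpa]
  -- c b ≠ 0
  have hcb : c b ≠ 0 := by
    intro hcb0
    set W : FreeGroup A := (S.toList.map fun a => FreeGroup.of a ^ c a).prod with hW
    have hWmk : PresentedGroup.mk (raagRels Γ) W = s := by
      rw [hW, map_list_prod, List.map_map, hc]
      have hfun : (⇑(PresentedGroup.mk (raagRels Γ))) ∘ (fun a => FreeGroup.of a ^ c a)
          = fun a => raagGen Γ a ^ c a := by
        funext a
        simp only [Function.comp_apply, map_zpow, raag_mk_of]
      rw [hfun]
    have h1 : raagLen Γ s ≤ ∑ a ∈ S, (c a).natAbs := by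
      refine le_trans (Nat.sInf_le ⟨W, hWmk, rfl⟩) ?_
      calc W.toWord.length = FreeGroup.norm W := rfl
        _ ≤ ((S.toList.map fun a => FreeGroup.of a ^ c a).map FreeGroup.norm).sum :=
            norm_list_prod_le _
        _ = (S.toList.map fun a => FreeGroup.norm (FreeGroup.of a ^ c a)).sum := by
            rw [List.map_map]; rfl
        _ ≤ (S.toList.map fun a => (c a).natAbs).sum :=
            List.sum_le_sum (fun a _ => norm_zpow_le a (c a))
        _ = ∑ a ∈ S, (c a).natAbs := Finset.sum_map_toList S _
    set L : List A := wb.toWord.map Prod.fst with hL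
    set T : Finset A := L.toFinset with hT
    have hbT : b ∈ T := by rw [hT, List.mem_toFinset]; exact hwb_mem
    have hsum_counts : ∑ a ∈ T, L.count a = L.length := by
      rw [hT]
      simpa using Multiset.toFinset_sum_count_eq (L : Multiset A)
    have h3 : ∀ a ∈ S, (c a).natAbs ≤ L.count a := by
      intro a ha
      rw [← hc_exp a (Finset.mem_toList.mpr ha)]
      exact hcount a
    have h4 : ∑ a ∈ S, (c a).natAbs = ∑ a ∈ S.erase b, (c a).natAbs :=
      (Finset.sum_erase _ (by simp [hcb0])).symm
    have h5 : ∑ a ∈ S.erase b, (c a).natAbs ≤ ∑ a ∈ S.erase b, L.count a :=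
      Finset.sum_le_sum (fun a ha => h3 a (Finset.mem_of_mem_erase ha))
    have h6 : ∑ a ∈ S.erase b, L.count a ≤ ∑ a ∈ T.erase b, L.count a := by
      apply Finset.sum_le_sum_of_ne_zero
      intro a ha hne
      exact Finset.mem_erase.mpr ⟨(Finset.mem_erase.mp ha).1,
        List.mem_toFinset.mpr (List.count_pos_iff.mp (Nat.pos_of_ne_zero hne))⟩
    have h7 : L.count b + ∑ a ∈ T.erase b, L.count a = L.length := by
      rw [Finset.add_sum_erase T (fun a => L.count a) hbT]; exact hsum_counts
    have h8 : 1 ≤ L.count b := List.count_pos_iff.mpr hwb_mem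
    have h9 : L.length = raagLen Γ s := by
      rw [hL, List.length_map]; exact hwb_len
    omega
  -- the detecting homomorphism φ into Perm ℤ
  have hφcomm : ∀ p q : A, Γ.Adj p q →
      Commute ((fun a => if a = x then Equiv.neg ℤ else
        if a = b then Equiv.addRight (1:ℤ) else 1) p)
        ((fun a => if a = x then Equiv.neg ℤ else
        if a = b then Equiv.addRight (1:ℤ) else 1) q) := by
    intro p q hpq
    simp only
    by_cases hp : p = x
    · by_cases hq : q = x
      · exact absurd hpq (by rw [hp, hq]; exact Γ.loopless.irrefl x)
      · by_cases hq2 : q = b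
        · exact absurd hpq (by rw [hp, hq2]; exact hbnadj)
        · rw [if_neg hq, if_neg hq2]
          exact Commute.one_right _
    · by_cases hp2 : p = b
      · by_cases hq : q = x
        · exact absurd hpq.symm (by rw [hp2, hq]; exact hbnadj)
        · by_cases hq2 : q = b
          · exact absurd hpq (by rw [hp2, hq2]; exact Γ.loopless.irrefl b)
          · rw [if_neg hq, if_neg hq2]
            exact Commute.one_right _
      · rw [if_neg hp, if_neg hp2]
        exact Commute.one_left _
  set φ : RAAG Γ →* Equiv.Perm ℤ := raagHom Γ _ hφcomm with hφ
  have hφgen : ∀ a : A, φ (raagGen Γ a) = if a = x then Equiv.neg ℤ else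
      if a = b then Equiv.addRight (1:ℤ) else 1 := fun a => raagHom_gen Γ _ hφcomm a
  have hφs : φ s = Equiv.addRight (1:ℤ) ^ (c b) := by
    rw [hc, map_list_prod, List.map_map]
    have h1 : S.toList.map (⇑φ ∘ fun a' => raagGen Γ a' ^ c a')
        = S.toList.map (fun a' => (if a' = b then Equiv.addRight (1:ℤ) else 1) ^ c a') := by
      apply List.map_congr_left
      intro a ha
      have hax : a ≠ x := fun h =>
        hx1 (h ▸ hsubsupp a (Finset.mem_toList.mp ha))
      simp only [Function.comp_apply, map_zpow, hφgen, if_neg hax]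
    rw [h1, prod_map_eq_single _ S.toList S.nodup_toList b (Finset.mem_toList.mpr hbS)
      (by intro b' _ hbb; simp [hbb])]
    simp
  have hφt : φ (raagGen Γ t) = 1 := by
    rw [hφgen, if_neg (Ne.symm hxt'), if_neg htb]
  have hφx : φ (raagGen Γ x) = Equiv.neg ℤ := by rw [hφgen, if_pos rfl]
  -- the element u
  set k : ℤ := c t with hk
  set u : RAAG Γ := raagGen Γ t ^ (-k) * s with hu
  have hu_prod : u = (S.toList.map fun a =>
      raagGen Γ a ^ ((if a = t then -k else 0) + c a)).prod := by
    have he : (S.toList.map fun a => raagGen Γ a ^ (if a = t then -k else 0)).prod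
        = raagGen Γ t ^ (-k) := by
      rw [prod_map_eq_single _ S.toList S.nodup_toList t (Finset.mem_toList.mpr htS)
        (by intro b' _ hbt; simp [hbt])]
      simp
    rw [hu, hc, ← he, prod_zpow_mul' _ _ hcommS]
  have hu_par : u ∈ parabolic Γ {a : A | a ≠ t} := by
    rw [hu_prod]
    apply Subgroup.list_prod_mem
    intro g hg
    obtain ⟨a, ha, rfl⟩ := List.mem_map.mp hg
    by_cases hat : a = t
    · subst hat
      rw [if_pos rfl, hk, neg_add_cancel, zpow_zero]
      exact Subgroup.one_mem _
    · exact Subgroup.zpow_mem _ (Subgroup.subset_closure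
        (show raagGen Γ a ∈ raagGen Γ '' {a' : A | a' ≠ t} from ⟨a, hat, rfl⟩)) _
  -- the commutator element
  set gElt : RAAG Γ := raagGen Γ x * u ^ n * (raagGen Γ x)⁻¹ * (u ^ n)⁻¹ with hg
  have hx_par : raagGen Γ x ∈ parabolic Γ {a : A | a ≠ t} :=
    Subgroup.subset_closure (show raagGen Γ x ∈ raagGen Γ '' {a' : A | a' ≠ t} from
      ⟨x, hxt', rfl⟩)
  have hg_par : gElt ∈ parabolic Γ {a : A | a ≠ t} := by
    rw [hg]
    exact Subgroup.mul_mem _ (Subgroup.mul_mem _ (Subgroup.mul_mem _ hx_par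
      (Subgroup.pow_mem _ hu_par n)) (Subgroup.inv_mem _ hx_par))
      (Subgroup.inv_mem _ (Subgroup.pow_mem _ hu_par n))
  -- commutation facts
  have hts : Commute (raagGen Γ t) s := by
    rw [hc]
    apply Commute.list_prod_right
    intro y hy
    obtain ⟨a, ha, rfl⟩ := List.mem_map.mp hy
    apply Commute.zpow_right
    by_cases hat : t = a
    · exact hat ▸ Commute.refl _
    · exact gen_commute_of_adj Γ
        (hclique t htsupp a (hsubsupp a (Finset.mem_toList.mp ha)) hat)
  have hxtc : Commute (raagGen Γ x) (raagGen Γ t) := gen_commute_of_adj Γ hxt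
  -- gElt is trivial in the quotient
  set N : Subgroup (RAAG Γ) := Subgroup.normalClosure {s ^ n} with hN
  set q : RAAG Γ →* RAAG Γ ⧸ N := QuotientGroup.mk' N with hq
  have hsn : q (s ^ n) = 1 :=
    (QuotientGroup.eq_one_iff _).mpr (Subgroup.subset_normalClosure rfl)
  have hqu : (q u) ^ n = (q (raagGen Γ t) ^ (-k)) ^ n := by
    have hcq : Commute (q (raagGen Γ t) ^ (-k)) (q s) := (hts.map q).zpow_left _
    rw [hu, map_mul, map_zpow, hcq.mul_pow, ← map_pow, hsn, mul_one]
  have hq1 : q gElt = 1 := by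
    have hcx : Commute (q (raagGen Γ x)) ((q (raagGen Γ t) ^ (-k)) ^ n) :=
      ((hxtc.map q).zpow_right _).pow_right _
    rw [hg]
    simp only [map_mul, map_inv, map_pow]
    rw [hqu]
    exact commutatorElement_eq_one_iff_commute.mpr hcx
  -- deduce gElt = 1 from injectivity
  have hmk1 : (QuotientGroup.mk gElt : RAAG Γ ⧸ N) = 1 := hq1
  have h12 : (⟨gElt, hg_par⟩ : parabolic Γ {a : A | a ≠ t}) = 1 := by
    apply hInj
    show (QuotientGroup.mk gElt : RAAG Γ ⧸ N) = QuotientGroup.mk _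
    rw [hmk1]
    simp
  have hg1 : gElt = 1 := congrArg Subtype.val h12
  -- but φ gElt ≠ 1
  have hφu : φ u = Equiv.addRight (1:ℤ) ^ (c b) := by
    rw [hu, map_mul, map_zpow, hφt, one_zpow, one_mul, hφs]
  have hφg : φ gElt = Equiv.neg ℤ * (Equiv.addRight (1:ℤ) ^ (c b)) ^ n * (Equiv.neg ℤ)⁻¹
      * ((Equiv.addRight (1:ℤ) ^ (c b)) ^ n)⁻¹ := by
    rw [hg]
    simp only [map_mul, map_inv, map_pow, hφu, hφx]
  have hφg1 : φ gElt = 1 := by rw [hg1, map_one]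
  rw [hφg] at hφg1
  set m : ℤ := c b * n with hm
  have hmne : m ≠ 0 := mul_ne_zero hcb (by
    have : (n : ℤ) ≠ 0 := by exact_mod_cast Nat.one_le_iff_ne_zero.mp hn
    exact this)
  have hRm : (Equiv.addRight (1:ℤ) ^ (c b)) ^ n = Equiv.addRight m := by
    rw [← zpow_natCast, ← zpow_mul, Equiv.zsmul_addRight]
    simp [hm]
  rw [hRm] at hφg1
  have hcomm0 := (commutatorElement_eq_one_iff_commute.mp hφg1).eq
  have h0 := congrArg (fun e : Equiv.Perm ℤ => e 0) hcomm0
  simp only [Equiv.Perm.mul_apply, Equiv.coe_addRight, Equiv.neg_apply] at h0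
  omega
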